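/- arXiv:1101.0858 — 5 statements merged into one kernel-verified Lean document; each statement's English description precedes it below -/
import Mathlib

section
/- For a rooted tree T with root r whose children are ordered so that the latencies of their subtrees satisfy L_{T_1} ≥ L_{T_2} ≥ ... ≥ L_{T_k}, the minimum aggregation latency of T (where at each time step each node may receive from at most one child, and a node can transmit its aggregated value only after receiving from all its children) equals max over i in {1,...,k} of (i + L_{T_i}). -/
/-- For a rooted tree whose root has `k` children whose subtrees have
latencies `L 0 ≥ L 1 ≥ ... ≥ L (k-1)` (i.e. `L` is antitone), the minimum aggregation
latency (minimum over valid schedules, where the root receives from child `j` at a time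
`t j ≥ L j + 1`, at most one child per time step, i.e. `t` injective, and the latency is
the time `Finset.univ.sup t` at which the root has received from all children) equals
`max_{i=1..k} (i + L_{T_i})`. -/
theorem stmt0 (k : ℕ) (L : Fin k → ℕ) (hL : Antitone L) :
    sInf { m : ℕ | ∃ t : Fin k → ℕ, Function.Injective t ∧ (∀ j, L j + 1 ≤ t j) ∧
        m = Finset.univ.sup t } =
      Finset.univ.sup (fun j : Fin k => (j : ℕ) + 1 + L j) := by
  set M := Finset.univ.sup (fun j : Fin k => (j : ℕ) + 1 + L j) with hM
  have hMj : ∀ j : Fin k, (j : ℕ) + 1 + L j ≤ M := fun j =>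
    Finset.le_sup (f := fun j : Fin k => (j : ℕ) + 1 + L j) (Finset.mem_univ j)
  -- the schedule t j = M - j witnesses achievability of M
  have hmem : M ∈ { m : ℕ | ∃ t : Fin k → ℕ, Function.Injective t ∧ (∀ j, L j + 1 ≤ t j) ∧
      m = Finset.univ.sup t } := by
    refine ⟨fun j => M - (j : ℕ), ?_, ?_, ?_⟩
    · intro a b hab
      have ha := hMj a; have hb := hMj b
      have hab' : M - (a : ℕ) = M - (b : ℕ) := hab
      exact Fin.ext (by omega)
    · intro j
      show L j + 1 ≤ M - (j : ℕ)
      have := hMj j; omega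
    · apply le_antisymm
      · apply Finset.sup_le
        intro j _
        have h0 : M - ((⟨0, j.pos⟩ : Fin k) : ℕ) ≤ Finset.univ.sup fun i : Fin k => M - (i : ℕ) :=
          Finset.le_sup (f := fun i : Fin k => M - (i : ℕ)) (Finset.mem_univ _)
        have := hMj j
        simp only [Nat.sub_zero] at h0
        omega
      · apply Finset.sup_le
        intro j _
        show M - (j : ℕ) ≤ M
        omega
  apply le_antisymm
  · exact Nat.sInf_le hmem
  · apply le_csInf ⟨M, hmem⟩
    rintro m ⟨t, hinj, hge, rfl⟩
    apply Finset.sup_le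
    intro j _
    -- the j+1 distinct values t i for i ≤ j are all ≥ L j + 1, so max ≥ L j + 1 + j
    have hsub : (Finset.Iic j).image t ⊆ Finset.Icc (L j + 1) (Finset.univ.sup t) := by
      intro x hx
      obtain ⟨i, hi, rfl⟩ := Finset.mem_image.mp hx
      rw [Finset.mem_Icc]
      refine ⟨(hge i).trans' ?_, Finset.le_sup (Finset.mem_univ i)⟩
      have : L j ≤ L i := hL (Finset.mem_Iic.mp hi)
      omega
    have hcard : ((Finset.Iic j).image t).card = (j : ℕ) + 1 := by
      rw [Finset.card_image_of_injective _ hinj]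
      simp [Fin.card_Iic]
    have := (Finset.card_le_card hsub)
    rw [hcard, Nat.card_Icc] at this
    have htj : L j + 1 ≤ Finset.univ.sup t :=
      (hge j).trans (Finset.le_sup (Finset.mem_univ j))
    omega
end

section
/- If T is a rooted tree of aggregation latency L > 0, then there is exactly one child i of the root whose data is transmitted at the final time step L, and removing the edge (root, i) splits T into two rooted trees each of aggregation latency at most L − 1. -/
inductive RTree : Type where
  | node : List RTree → RTree

namespace RTree

/-- number of vertices of a rooted tree -/
def size : RTree → ℕ
  | node ts => 1 + (ts.attach.map (fun x => size x.1)).sum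
decreasing_by
  have := List.sizeOf_lt_of_mem x.2
  simp only [node.sizeOf_spec]; omega

/-- aggregation latency of a list of child-subtree latencies: sort decreasingly as
`L_1 ≥ L_2 ≥ ...` and take `max_i (i + L_{T_i})` (here with 0-based index `p.1`,
the value is `p.1 + 1 + p.2`). -/
def aggL (l : List ℕ) : ℕ :=
  ((l.mergeSort (fun a b => decide (b ≤ a))).zipIdx.map (fun p => p.2 + 1 + p.1)).foldr max 0

/-- aggregation latency, defined recursively: a single vertex has latency 0, and a root
whose children subtrees have latencies `L_1 ≥ ... ≥ L_k` has latency `max_i (i + L_i)`. -/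
def latency : RTree → ℕ
  | node ts => aggL (ts.attach.map (fun x => latency x.1))
decreasing_by
  have := List.sizeOf_lt_of_mem x.2
  simp only [node.sizeOf_spec]; omega

end RTree

lemma my_foldr_max_le {M : ℕ} : ∀ {l : List ℕ}, (∀ x ∈ l, x ≤ M) → l.foldr max 0 ≤ M
  | [], _ => Nat.zero_le M
  | a :: l, h => by
      simp only [List.foldr_cons, max_le_iff]
      exact ⟨h a (.head _), my_foldr_max_le fun x hx => h x (.tail _ hx)⟩

lemma my_card_filter (n : ℕ) (q : Fin n → Prop) [DecidablePred q] :
    (Finset.univ.filter q).card = (List.finRange n).countP (fun i => decide (q i)) := by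
  rw [Fin.univ_def, Finset.filter, Finset.card]
  simp [Multiset.countP_eq_card_filter, List.countP_eq_length_filter]

lemma my_countP_get (l : List ℕ) (p : ℕ → Bool) :
    l.countP p = (List.finRange l.length).countP (fun i => p l[i]) := by
  conv_lhs => rw [← List.ofFn_getElem (xs := l)]
  rw [List.ofFn_eq_map, List.countP_map]
  rfl

lemma aggL_le_of_schedule (l : List ℕ) (M : ℕ) (t : Fin l.length → ℕ)
    (hinj : Function.Injective t) (h1 : ∀ i, l.get i + 1 ≤ t i) (h2 : ∀ i, t i ≤ M) :
    RTree.aggL l ≤ M := by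
  unfold RTree.aggL
  apply my_foldr_max_le
  intro x hx
  set l' := l.mergeSort (fun a b => decide (b ≤ a)) with hl'
  obtain ⟨p, hp, rfl⟩ := List.mem_map.1 hx
  obtain ⟨i, hi, hpe⟩ := List.mem_iff_getElem.1 hp
  rw [List.getElem_zipIdx] at hpe
  subst hpe
  have hi' : i < l'.length := by simpa [List.length_zipIdx] using hi
  set v := l'[i]'(by simpa [List.length_zipIdx] using hi) with hv
  show 0 + i + 1 + v ≤ M
  have hsort : List.Pairwise (fun a b => decide (b ≤ a) = true) l' :=
    List.pairwise_mergeSort (fun a b c ha hb => by simp at *; omega)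
      (fun a b => by simp; omega) l
  have hcount : i + 1 ≤ l'.countP (fun x => decide (v ≤ x)) := by
    have hlen : (l'.take (i+1)).length = i + 1 := by
      rw [List.length_take]; omega
    have hall : ∀ a ∈ l'.take (i+1), decide (v ≤ a) = true := by
      intro a ha
      obtain ⟨k, hk, hke⟩ := List.mem_iff_getElem.1 ha
      rw [List.getElem_take] at hke
      subst hke
      rw [hlen] at hk
      rcases Nat.lt_or_ge k i with h | h
      · have := List.pairwise_iff_getElem.1 hsort k i (by omega) hi' h
        simpa using this
      · have : k = i := by omega
        subst this; simp [hv]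
    calc i + 1 = (l'.take (i+1)).countP (fun x => decide (v ≤ x)) := by
          rw [List.countP_eq_length.2 hall, hlen]
      _ ≤ l'.countP (fun x => decide (v ≤ x)) :=
          (List.take_sublist _ _).countP_le
  have hperm : l'.countP (fun x => decide (v ≤ x)) = l.countP (fun x => decide (v ≤ x)) :=
    (List.mergeSort_perm l _).countP_eq _
  have hget : l.countP (fun x => decide (v ≤ x)) =
      (Finset.univ.filter (fun k : Fin l.length => v ≤ l[k])).card := by
    rw [my_countP_get, my_card_filter]
  have hmaps : ∀ k ∈ Finset.univ.filter (fun k : Fin l.length => v ≤ l[k]),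
      t k ∈ Finset.Icc (v+1) M := by
    intro k hk
    rw [Finset.mem_filter] at hk
    rw [Finset.mem_Icc]
    have ha := h1 k
    have hb := h2 k
    have hk2 := hk.2
    simp only [List.get_eq_getElem] at ha
    simp only [Fin.getElem_fin] at hk2
    exact ⟨by omega, hb⟩
  have hcard := Finset.card_le_card_of_injOn t hmaps hinj.injOn
  rw [Nat.card_Icc] at hcard
  omega

/-- if `T = node ts` has aggregation latency `L > 0`, then for any valid
schedule at the root (the root receives the aggregated data of child `j` at time `t j`,
with `t` injective, `t j ≥ latency (T_j) + 1`, and final reception time `sup t = L`),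
there is exactly one child `j` whose data is transmitted at the final time step `L`;
moreover removing the edge (root, j) splits `T` into the subtree `T_j` and the remaining
tree `node (ts.eraseIdx j)`, each of aggregation latency at most `L - 1`. -/
theorem stmt2 (ts : List RTree) (L : ℕ) (hL : (RTree.node ts).latency = L) (hpos : 0 < L)
    (t : Fin ts.length → ℕ) (hinj : Function.Injective t)
    (hvalid : ∀ j, (ts.get j).latency + 1 ≤ t j)
    (hsched : Finset.univ.sup t = L) :
    ∃! j : Fin ts.length, t j = L ∧ (ts.get j).latency ≤ L - 1 ∧
      (RTree.node (ts.eraseIdx j)).latency ≤ L - 1 := by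
  have hn : 0 < ts.length := by
    by_contra h
    haveI : IsEmpty (Fin ts.length) := ⟨fun i => by have := i.isLt; omega⟩
    rw [Finset.univ_eq_empty, Finset.sup_empty] at hsched
    have : (⊥ : ℕ) = 0 := rfl
    omega
  obtain ⟨j, -, hj⟩ := Finset.exists_mem_eq_sup Finset.univ
    (Finset.univ_nonempty_iff.2 ⟨⟨0, hn⟩⟩) t
  have hjL : t j = L := hj.symm.trans hsched
  have htle : ∀ k, t k ≤ L := fun k => hsched ▸ Finset.le_sup (Finset.mem_univ k)
  refine ⟨j, ⟨hjL, ?_, ?_⟩, ?_⟩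
  · have := hvalid j; omega
  · have hlen : (ts.eraseIdx j).length = ts.length - 1 := by
      rw [List.length_eraseIdx]; simp [j.isLt]
    have hlat : (RTree.node (ts.eraseIdx j)).latency =
        RTree.aggL ((ts.eraseIdx j).map RTree.latency) := by
      rw [RTree.latency, List.attach_map_val]
    rw [hlat]
    set l2 := (ts.eraseIdx j).map RTree.latency with hl2
    have hl2len : l2.length = ts.length - 1 := by rw [hl2, List.length_map, hlen]
    have hidx : ∀ i : Fin l2.length, (if i.1 < j.1 then i.1 else i.1 + 1) < ts.length := by
      intro i
      have h1 : (i : ℕ) < ts.length - 1 := lt_of_lt_of_eq i.isLt hl2len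
      have h2 := j.isLt; split <;> omega
    set t2 : Fin l2.length → ℕ := fun i => t ⟨if i.1 < j.1 then i.1 else i.1 + 1, hidx i⟩
      with ht2
    have key : ∀ (k : Fin ts.length), (ts[k.1]).latency + 1 ≤ t k := by
      intro k; have := hvalid k; simpa using this
    apply aggL_le_of_schedule l2 (L-1) t2
    · intro i i' h
      have h2 := hinj h
      rw [Fin.mk.injEq] at h2
      apply Fin.ext
      split at h2 <;> split at h2 <;> omega
    · intro i
      have hval : l2.get i =
          (ts[if i.1 < j.1 then i.1 else i.1 + 1]'(hidx i)).latency := by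
        simp only [hl2, List.get_eq_getElem, List.getElem_map]
        congr 1
        by_cases hc : i.1 < j.1 <;> simp [List.getElem_eraseIdx, hc]
      rw [hval]
      exact key ⟨_, hidx i⟩
    · intro i
      have h1 : t2 i ≤ L := htle _
      have h2 : t2 i ≠ L := by
        intro h
        have := hinj (h.trans hjL.symm)
        have := congrArg Fin.val this
        simp only [] at this
        split at this <;> omega
      omega
  · rintro j' ⟨hj', -, -⟩
    exact hinj (hj'.trans hjL.symm)
end

section
/- The balanced (complete) binary tree on n nodes, rooted at its top vertex, has aggregation latency 2⌈log₂(n+1)⌉ − 2. -/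
/-- the complete (balanced) binary tree of depth h: every internal node has exactly two
children and all leaves at depth h. It has 2^(h+1) - 1 nodes. -/
def cbt : ℕ → RTree
  | 0 => RTree.node []
  | h + 1 => RTree.node [cbt h, cbt h]

lemma latency_cbt (h : ℕ) : (cbt h).latency = 2 * h := by
  induction h with
  | zero => simp [cbt, RTree.latency, RTree.aggL, List.mergeSort]
  | succ h ih =>
    rw [cbt, RTree.latency, RTree.aggL]
    simp only [List.attach, List.attachWith, List.pmap, List.map]
    rw [ih]
    have : ([2*h, 2*h].mergeSort (fun a b => decide (b ≤ a))) = [2*h, 2*h] := by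
      simp [List.mergeSort]
    rw [this]
    simp [List.zipIdx]; omega

lemma size_cbt (h : ℕ) : (cbt h).size = 2 ^ (h + 1) - 1 := by
  induction h with
  | zero => simp [cbt, RTree.size]
  | succ h ih =>
    rw [cbt, RTree.size]
    simp only [List.attach, List.attachWith, List.pmap, List.map, List.sum_cons,
      List.sum_nil]
    rw [ih]
    have : 1 ≤ 2 ^ (h + 1) := Nat.one_le_two_pow
    rw [pow_succ]
    omega

/-- the balanced (complete) binary tree on n nodes has aggregation latency
2⌈log₂(n+1)⌉ − 2. -/
theorem stmt4 (h n : ℕ) (hn : n = (cbt h).size) :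
    (cbt h).latency = 2 * Nat.clog 2 (n + 1) - 2 := by
  subst hn
  rw [latency_cbt, size_cbt]
  have h1 : 1 ≤ 2 ^ (h + 1) := Nat.one_le_two_pow
  have : 2 ^ (h + 1) - 1 + 1 = 2 ^ (h + 1) := by omega
  rw [this, Nat.clog_pow 2 (h+1) (by norm_num)]
  omega
end

section
/- Let u, v be points in Q = [0, n^(1/d)]^d at distance R = ‖u − v‖, and let V_n be n i.i.d. uniform points in Q. Let E_k(u,v;V_n) be the minimum of ∑_{i=1}^m ‖u_i − u_{i−1}‖^ν over all sequences u = u_0, u_1, ..., u_m = v with m ≤ k and u_1,...,u_{m−1} ∈ V_n. Then for ν ≥ 1, E[E_k(u,v;V_n)] = O(max{k(R/k)^ν, R + 1}). -/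
set_option maxHeartbeats 1000000

open MeasureTheory Metric

noncomputable section AuxStmt15

variable {d : ℕ}
local notation "E" => EuclideanSpace ℝ (Fin d)

lemma meas_eval (i : Fin d) : Measurable (fun y : E => y i) :=
  (measurable_pi_apply (a := i)).comp (MeasurableEquiv.toLp 2 (Fin d → ℝ)).symm.measurable

lemma meas_coordSet (s : Fin d → Set ℝ) (hs : ∀ i, MeasurableSet (s i)) :
    MeasurableSet {y : E | ∀ i, y i ∈ s i} := by
  have : {y : E | ∀ i, y i ∈ s i} = ⋂ i, (fun y : E => y i) ⁻¹' s i := by ext y; simp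
  rw [this]
  exact MeasurableSet.iInter fun i => (hs i).preimage (meas_eval i)

lemma vol_box (s : Fin d → Set ℝ) (hs : ∀ i, MeasurableSet (s i)) :
    volume {y : E | ∀ i, y i ∈ s i} = ∏ i, volume (s i) := by
  have h := (EuclideanSpace.volume_preserving_symm_measurableEquiv_toLp (Fin d)).measure_preimage
    (MeasurableSet.univ_pi hs).nullMeasurableSet
  have h2 : (⇑(MeasurableEquiv.toLp 2 (Fin d → ℝ)).symm) ⁻¹' (Set.univ.pi s)
      = {y : E | ∀ i, y i ∈ s i} := by
    ext y; simp [Set.mem_pi]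
  rw [h2] at h
  rw [h, volume_pi_pi]

def Box (L : ℝ) (c : E) : Set E :=
  {y : E | ∀ i, y i ∈ Set.Icc (max (c i - 1) 0) (min (c i + 1) L)}

lemma Box_measurable (L : ℝ) (c : E) : MeasurableSet (Box L c) :=
  meas_coordSet _ (fun _ => measurableSet_Icc)

lemma dist_le_sqrt_d (c y : E) (h : ∀ i, |y i - c i| ≤ 1) :
    dist y c ≤ Real.sqrt d := by
  rw [EuclideanSpace.dist_eq]
  apply Real.sqrt_le_sqrt
  calc (∑ i, dist (y i) (c i) ^ 2) ≤ ∑ _i : Fin d, (1:ℝ) := by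
        apply Finset.sum_le_sum
        intro i _
        have := h i
        rw [Real.dist_eq]
        nlinarith [abs_nonneg (y i - c i)]
    _ = d := by simp

lemma Box_subset_ball (L : ℝ) (c : E) : Box L c ⊆ closedBall c (Real.sqrt d) := by
  intro y hy
  rw [mem_closedBall]
  apply dist_le_sqrt_d
  intro i
  obtain ⟨h1, h2⟩ := hy i
  rw [abs_le]
  constructor
  · have := le_max_left (c i - 1) 0; linarith [le_trans this h1]
  · have := min_le_left (c i + 1) L; linarith [le_trans h2 this]

lemma Box_subset_Q (L : ℝ) (c : E) :
    Box L c ⊆ {y : E | ∀ i, y i ∈ Set.Icc 0 L} := by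
  intro y hy i
  obtain ⟨h1, h2⟩ := hy i
  exact ⟨le_trans (le_max_right _ _) h1, le_trans h2 (min_le_right _ _)⟩

lemma one_le_vol_Box (L : ℝ) (hL : 1 ≤ L) (c : E)
    (hc : ∀ i, c i ∈ Set.Icc 0 L) : 1 ≤ volume (Box L c) := by
  rw [Box, vol_box _ (fun _ => measurableSet_Icc)]
  calc (1 : ENNReal) = ∏ _i : Fin d, 1 := by simp
    _ ≤ ∏ i, volume (Set.Icc (max (c i - 1) 0) (min (c i + 1) L)) := by
        apply Finset.prod_le_prod'
        intro i _
        rw [Real.volume_Icc]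
        rw [show (1 : ENNReal) = ENNReal.ofReal 1 by simp]
        apply ENNReal.ofReal_le_ofReal
        obtain ⟨hc1, hc2⟩ := hc i
        have hmax : max (c i - 1) 0 ≤ c i := max_le (by linarith) hc1
        rcases le_total (c i + 1) L with hcase | hcase
        · rw [min_eq_left hcase]; linarith
        · rw [min_eq_right hcase]
          have : max (c i - 1) 0 ≤ L - 1 := max_le (by linarith) (by linarith)
          linarith

lemma L_pow (d n : ℕ) (hd : 0 < d) : ((n:ℝ) ^ ((1:ℝ)/d)) ^ (d:ℕ) = (n:ℝ) := by
  rw [← Real.rpow_natCast ((n:ℝ) ^ ((1:ℝ)/d)) d, ← Real.rpow_mul (Nat.cast_nonneg n)]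
  rw [one_div, inv_mul_cancel₀ (by exact_mod_cast hd.ne')]
  exact Real.rpow_one _

lemma vol_Q (d n : ℕ) (hd : 0 < d) :
    volume {y : EuclideanSpace ℝ (Fin d) | ∀ i, y i ∈ Set.Icc 0 ((n:ℝ) ^ ((1:ℝ)/d))} = n := by
  rw [vol_box _ (fun i => measurableSet_Icc)]
  simp only [Real.volume_Icc, sub_zero, Finset.prod_const, Finset.card_univ, Fintype.card_fin]
  rw [← ENNReal.ofReal_pow (Real.rpow_nonneg (Nat.cast_nonneg n) _), L_pow d n hd]
  simp

lemma isProb (d n : ℕ) (hd : 0 < d) (hn : 1 ≤ n) :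
    IsProbabilityMeasure ((n : ENNReal)⁻¹ • volume.restrict
      {y : EuclideanSpace ℝ (Fin d) | ∀ i, y i ∈ Set.Icc 0 ((n:ℝ) ^ ((1:ℝ)/d))}) := by
  constructor
  rw [Measure.smul_apply, Measure.restrict_apply MeasurableSet.univ, Set.univ_inter,
    vol_Q d n hd, smul_eq_mul]
  rw [ENNReal.inv_mul_cancel (by exact_mod_cast Nat.one_le_iff_ne_zero.mp hn)
    (ENNReal.natCast_ne_top n)]

lemma one_sub_le_exp (x : ENNReal) (hx : x ≠ ⊤) :
    1 - x ≤ ENNReal.ofReal (Real.exp (-x.toReal)) := by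
  rw [tsub_le_iff_right]
  calc (1 : ENNReal) = ENNReal.ofReal 1 := by simp
    _ ≤ ENNReal.ofReal (Real.exp (-x.toReal) + x.toReal) := by
        apply ENNReal.ofReal_le_ofReal
        have := Real.add_one_le_exp (-x.toReal)
        linarith
    _ = ENNReal.ofReal (Real.exp (-x.toReal)) + ENNReal.ofReal x.toReal :=
        ENNReal.ofReal_add (Real.exp_nonneg _) ENNReal.toReal_nonneg
    _ = ENNReal.ofReal (Real.exp (-x.toReal)) + x := by rw [ENNReal.ofReal_toReal hx]

lemma avoid_measure (hd : 0 < d) (n : ℕ) (hn : 1 ≤ n) (N : ℕ) (cs : ℕ → E)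
    (hcs : ∀ s, s < N → ∀ i, cs s i ∈ Set.Icc 0 ((n:ℝ) ^ ((1:ℝ)/d)))
    (hsep : ∀ s, s < N → ∀ s', s' < N → s ≠ s' → 2 * Real.sqrt d < dist (cs s) (cs s')) :
    (Measure.pi fun _ : Fin n => (n : ENNReal)⁻¹ • volume.restrict
        {y : E | ∀ i, y i ∈ Set.Icc 0 ((n : ℝ) ^ ((1 : ℝ) / d))})
      {w : Fin n → E | ∀ l, ∀ s, s < N → w l ∉ closedBall (cs s) (Real.sqrt d)}
    ≤ ENNReal.ofReal (Real.exp (-(N:ℝ))) := by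
  set L : ℝ := (n:ℝ) ^ ((1:ℝ)/d) with hLdef
  set Q : Set E := {y : E | ∀ i, y i ∈ Set.Icc 0 L} with hQdef
  set μ1 : Measure E := (n : ENNReal)⁻¹ • volume.restrict Q with hμ1def
  haveI hprob : IsProbabilityMeasure μ1 := isProb d n hd hn
  have hL : (1:ℝ) ≤ L := Real.one_le_rpow (by exact_mod_cast hn) (by positivity)
  set K : Set E := {x : E | ∀ s, s < N → x ∉ closedBall (cs s) (Real.sqrt d)} with hKdef
  have hKmeas : MeasurableSet K := by
    have : K = ⋂ (s : ℕ) (_ : s < N), (closedBall (cs s) (Real.sqrt d))ᶜ := by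
      ext x; simp [hKdef]
    rw [this]
    exact MeasurableSet.iInter fun s => MeasurableSet.iInter fun _ =>
      (measurableSet_closedBall).compl
  have hset : {w : Fin n → E | ∀ l, ∀ s, s < N → w l ∉ closedBall (cs s) (Real.sqrt d)}
      = Set.pi Set.univ (fun _ : Fin n => K) := by
    ext w; simp [Set.mem_pi, hKdef]
  rw [hset, Measure.pi_pi]
  have hKc : (N : ENNReal) / n ≤ μ1 Kᶜ := by
    have hsub : (⋃ s ∈ Finset.range N, Box L (cs s)) ⊆ Kᶜ := by
      intro x hx
      simp only [Set.mem_iUnion, Finset.mem_range] at hx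
      obtain ⟨s, hs, hxs⟩ := hx
      intro hxK
      exact hxK s hs (Box_subset_ball L (cs s) hxs)
    have hdisj : (↑(Finset.range N) : Set ℕ).PairwiseDisjoint (fun s => Box L (cs s)) := by
      intro s hs s' hs' hne
      simp only [Finset.coe_range, Set.mem_Iio] at hs hs'
      rw [Function.onFun, Set.disjoint_left]
      intro x hx1 hx2
      have d1 := Box_subset_ball L (cs s) hx1
      have d2 := Box_subset_ball L (cs s') hx2
      rw [mem_closedBall] at d1 d2
      have := hsep s hs s' hs' hne
      have htri := dist_triangle (cs s) x (cs s')
      rw [dist_comm (cs s) x] at htri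
      linarith
    have hvol : (N : ENNReal) ≤ volume (⋃ s ∈ Finset.range N, Box L (cs s)) := by
      rw [measure_biUnion_finset hdisj (fun s _ => Box_measurable L (cs s))]
      calc (N : ENNReal) = ∑ _s ∈ Finset.range N, 1 := by simp
        _ ≤ ∑ s ∈ Finset.range N, volume (Box L (cs s)) :=
            Finset.sum_le_sum fun s hs =>
              one_le_vol_Box L hL (cs s) (hcs s (Finset.mem_range.mp hs))
    have hμ1U : (N : ENNReal) / n ≤ μ1 (⋃ s ∈ Finset.range N, Box L (cs s)) := by
      have hUQ : (⋃ s ∈ Finset.range N, Box L (cs s)) ⊆ Q := by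
        apply Set.iUnion₂_subset
        intro s _
        exact Box_subset_Q L (cs s)
      have hUmeas : MeasurableSet (⋃ s ∈ Finset.range N, Box L (cs s)) :=
        MeasurableSet.biUnion (Finset.range N).countable_toSet
          (fun s _ => Box_measurable L (cs s))
      rw [hμ1def, Measure.smul_apply, Measure.restrict_apply hUmeas,
        Set.inter_eq_self_of_subset_left hUQ, smul_eq_mul]
      rw [ENNReal.div_eq_inv_mul]
      exact mul_le_mul_right hvol _
    exact le_trans hμ1U (measure_mono hsub)
  have hμ1K : μ1 K ≤ ENNReal.ofReal (Real.exp (-((N:ℝ)/n))) := by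
    have heq : μ1 K = 1 - μ1 Kᶜ := by
      apply ENNReal.eq_sub_of_add_eq (measure_ne_top μ1 Kᶜ)
      rw [measure_add_measure_compl hKmeas, measure_univ]
    rw [heq]
    calc (1 : ENNReal) - μ1 Kᶜ ≤ 1 - (N:ENNReal)/n := tsub_le_tsub_left hKc 1
      _ ≤ ENNReal.ofReal (Real.exp (-(((N:ENNReal)/n)).toReal)) :=
          one_sub_le_exp _ (by
            apply ne_of_lt
            exact ENNReal.div_lt_top (ENNReal.natCast_ne_top N)
              (by exact_mod_cast Nat.one_le_iff_ne_zero.mp hn))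
      _ = ENNReal.ofReal (Real.exp (-((N:ℝ)/n))) := by
          rw [ENNReal.toReal_div]; norm_num
  calc (∏ _l : Fin n, μ1 K) = μ1 K ^ n := by
        rw [Finset.prod_const, Finset.card_univ, Fintype.card_fin]
    _ ≤ ENNReal.ofReal (Real.exp (-((N:ℝ)/n))) ^ n := pow_le_pow_left₀ (by positivity) hμ1K n
    _ = ENNReal.ofReal (Real.exp (-((N:ℝ)/n)) ^ n) :=
        (ENNReal.ofReal_pow (Real.exp_nonneg _) n).symm
    _ = ENNReal.ofReal (Real.exp (-(N:ℝ))) := by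
        rw [← Real.exp_nat_mul]
        congr 1
        have hn0 : (n:ℝ) ≠ 0 := by exact_mod_cast Nat.one_le_iff_ne_zero.mp hn
        field_simp

def Bset (d n : ℕ) (c : ℕ → EuclideanSpace ℝ (Fin d)) (a g : ℕ) :
    Set (Fin n → EuclideanSpace ℝ (Fin d)) :=
  {w | ∀ j, a < j → j < a + g → ∀ l, w l ∉ closedBall (c j) (Real.sqrt d)}

lemma seg_coord (u v : E) (lam : ℝ) (i : Fin d) :
    (u + lam • (v - u)) i = u i + lam * (v i - u i) := by
  simp [PiLp.add_apply, PiLp.smul_apply, PiLp.sub_apply, smul_eq_mul]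


lemma Bset_measurable (d n : ℕ) (c : ℕ → EuclideanSpace ℝ (Fin d)) (a g : ℕ) :
    MeasurableSet (Bset d n c a g) := by
  have : Bset d n c a g = ⋂ (j : ℕ) (_ : a < j) (_ : j < a + g) (l : Fin n),
      ((fun w : Fin n → EuclideanSpace ℝ (Fin d) => w l) ⁻¹' closedBall (c j) (Real.sqrt d))ᶜ := by
    ext w; simp [Bset]
  rw [this]
  exact MeasurableSet.iInter fun j => MeasurableSet.iInter fun _ => MeasurableSet.iInter fun _ =>
    MeasurableSet.iInter fun l => (measurableSet_closedBall.preimage (measurable_pi_apply l)).compl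

lemma seg_mem_Q (L : ℝ) (u v : E) (hu : ∀ i, u i ∈ Set.Icc 0 L) (hv : ∀ i, v i ∈ Set.Icc 0 L)
    (lam : ℝ) (h0 : 0 ≤ lam) (h1 : lam ≤ 1) (i : Fin d) :
    (u + lam • (v - u)) i ∈ Set.Icc 0 L := by
  rw [seg_coord]
  obtain ⟨a1, a2⟩ := hu i
  obtain ⟨b1, b2⟩ := hv i
  constructor
  · nlinarith
  · nlinarith

lemma seg_dist (u v : E) (lam lam' : ℝ) :
    dist (u + lam • (v - u)) (u + lam' • (v - u)) = |lam - lam'| * dist u v := by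
  rw [dist_eq_norm]
  have : (u + lam • (v - u)) - (u + lam' • (v - u)) = (lam - lam') • (v - u) := by
    module
  rw [this, norm_smul, Real.norm_eq_abs, dist_eq_norm, norm_sub_rev]

/-- The greedy-path bound. -/
lemma path_bound (ν : ℝ) (hν : 1 ≤ ν) (n k : ℕ) (u v : E) (w : Fin n → E)
    (m : ℕ) (hm1 : 1 ≤ m) (hmk : m ≤ k) :
    sInf {En : ℝ | ∃ m' ≤ k, ∃ U : ℕ → E, U 0 = u ∧ U m' = v ∧
        (∀ i, 0 < i → i < m' → ∃ j : Fin n, U i = w j) ∧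
        En = ∑ i ∈ Finset.Icc 1 m', dist (U i) (U (i - 1)) ^ ν}
      ≤ ∑ x ∈ (Finset.range m ×ˢ Finset.Icc 1 m).filter (fun x => x.1 + x.2 ≤ m),
          Set.indicator (Bset d n (fun j => u + ((j:ℝ)/m) • (v - u)) x.1 x.2)
            (fun _ => (dist u v / m + 2 * Real.sqrt d) ^ ν * (x.2:ℝ) ^ ν) w := by
  classical
  set R : ℝ := dist u v with hRdef
  set r : ℝ := Real.sqrt d with hrdef
  have hr0 : 0 ≤ r := Real.sqrt_nonneg d
  set h : ℝ := R / m with hhdef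
  have hm0 : (0:ℝ) < m := by exact_mod_cast hm1
  have hh0 : 0 ≤ h := div_nonneg dist_nonneg hm0.le
  set c : ℕ → E := fun j => u + ((j:ℝ)/m) • (v - u) with hcdef
  set occ : ℕ → Prop := fun j => ∃ l : Fin n, w l ∈ closedBall (c j) r with hoccdef
  set O : Finset ℕ := insert 0 (insert m ((Finset.Icc 1 (m-1)).filter occ)) with hOdef
  have hO0 : 0 ∈ O := Finset.mem_insert_self _ _
  have hOm : m ∈ O := Finset.mem_insert_of_mem (Finset.mem_insert_self _ _)
  have hOsub : ∀ j ∈ O, j ≤ m := by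
    intro j hj
    rw [hOdef] at hj
    simp only [Finset.mem_insert, Finset.mem_filter, Finset.mem_Icc] at hj
    rcases hj with rfl | rfl | ⟨⟨_, h2⟩, _⟩
    · exact Nat.zero_le m
    · exact le_rfl
    · omega
  have hOocc : ∀ j ∈ O, j ≠ 0 → j ≠ m → occ j := by
    intro j hj hj0 hjm
    rw [hOdef] at hj
    simp only [Finset.mem_insert, Finset.mem_filter, Finset.mem_Icc] at hj
    rcases hj with rfl | rfl | ⟨_, h2⟩
    · exact absurd rfl hj0
    · exact absurd rfl hjm
    · exact h2
  have hnotO : ∀ j, 0 < j → j < m → j ∉ O → ¬ occ j := by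
    intro j hj1 hj2 hjO hocc
    apply hjO
    rw [hOdef]
    simp only [Finset.mem_insert, Finset.mem_filter, Finset.mem_Icc]
    right; right
    exact ⟨⟨hj1, by omega⟩, hocc⟩
  -- the enumeration
  set p : ℕ := O.card - 1 with hpdef
  have hcard : O.card = p + 1 := by
    have : 0 < O.card := Finset.card_pos.mpr ⟨0, hO0⟩
    omega
  set e := O.orderIsoOfFin hcard with hedef
  set ε : ℕ → ℕ := fun i => if hi : i < p + 1 then (e ⟨i, hi⟩ : ℕ) else m with hεdef
  have hεO : ∀ i, i < p + 1 → ε i ∈ O := by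
    intro i hi; rw [hεdef]; simp only [hi, dif_pos]; exact (e ⟨i, hi⟩).2
  have hεmono : ∀ i i', i < p + 1 → i' < p + 1 → i < i' → ε i < ε i' := by
    intro i i' hi hi' hlt
    rw [hεdef]
    simp only [hi, hi', dif_pos]
    have : (⟨i, hi⟩ : Fin (p+1)) < ⟨i', hi'⟩ := by exact_mod_cast hlt
    exact_mod_cast e.strictMono this
  have hε0 : ε 0 = 0 := by
    have h1 : ε 0 ∈ O := hεO 0 (Nat.succ_pos p)
    have h2 : ε 0 ≤ 0 := by
      have hsy : e (e.symm ⟨0, hO0⟩) = ⟨0, hO0⟩ := e.apply_symm_apply _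
      have hle : (⟨0, Nat.succ_pos p⟩ : Fin (p+1)) ≤ e.symm ⟨0, hO0⟩ := Fin.zero_le _
      have := e.monotone hle
      rw [hsy] at this
      rw [hεdef]
      simp only [Nat.succ_pos p, dif_pos]
      exact_mod_cast this
    omega
  have hεp : ε p = m := by
    have hple : p < p + 1 := Nat.lt_succ_self p
    apply le_antisymm (hOsub _ (hεO p hple))
    have hsy : e (e.symm ⟨m, hOm⟩) = ⟨m, hOm⟩ := e.apply_symm_apply _
    have hle : e.symm ⟨m, hOm⟩ ≤ (⟨p, hple⟩ : Fin (p+1)) := by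
      apply Fin.le_last _ |>.trans
      simp [Fin.last]
    have := e.monotone hle
    rw [hsy] at this
    rw [hεdef]
    simp only [hple, dif_pos]
    exact_mod_cast this
  have hgap : ∀ i, i < p → ∀ j, ε i < j → j < ε (i+1) → ¬ occ j := by
    intro i hi j hj1 hj2
    have hi1 : i < p + 1 := by omega
    have hi2 : i + 1 < p + 1 := by omega
    have hjm : j < m := by
      have : ε (i+1) ≤ m := hOsub _ (hεO _ hi2)
      omega
    have hj0 : 0 < j := by
      have : ε 0 ≤ ε i := by
        rcases Nat.eq_zero_or_pos i with rfl | hipos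
        · exact le_rfl
        · exact (hεmono 0 i (Nat.succ_pos p) hi1 hipos).le
      omega
    apply hnotO j hj0 hjm
    intro hjO
    set i'' := e.symm ⟨j, hjO⟩ with hi''def
    have hei'' : (e i'' : ℕ) = j := by rw [hi''def, e.apply_symm_apply]
    have hεi : ε i = ((e ⟨i, hi1⟩ : { x // x ∈ O }) : ℕ) := by rw [hεdef]; exact dif_pos hi1
    have hεi1 : ε (i+1) = ((e ⟨i+1, hi2⟩ : { x // x ∈ O }) : ℕ) := by rw [hεdef]; exact dif_pos hi2
    have hlow : (⟨i, hi1⟩ : Fin (p+1)) < i'' := by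
      apply e.strictMono.lt_iff_lt.mp
      rw [← Subtype.coe_lt_coe, hei'']
      omega
    have hhigh : i'' < (⟨i+1, hi2⟩ : Fin (p+1)) := by
      apply e.strictMono.lt_iff_lt.mp
      rw [← Subtype.coe_lt_coe, hei'']
      omega
    rw [Fin.lt_iff_val_lt_val] at hlow hhigh
    simp at hlow hhigh
    omega
  -- the path points
  set pt : ℕ → E := fun j => if j = 0 then u else if j = m then v
    else if hj : occ j then w hj.choose else u with hptdef
  have hptu : pt 0 = u := by simp [hptdef]
  have hptv : pt m = v := by
    show (if m = 0 then u else if m = m then v else _) = v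
    rw [if_neg (by omega : m ≠ 0), if_pos rfl]
  have hc0 : c 0 = u := by simp [hcdef]
  have hcm : c m = v := by
    rw [hcdef]
    simp only []
    rw [div_self (by positivity : (m:ℝ) ≠ 0), one_smul]
    abel
  have hptball : ∀ j ∈ O, dist (pt j) (c j) ≤ r := by
    intro j hj
    rcases eq_or_ne j 0 with rfl | hj0
    · rw [hptu, hc0, dist_self]; exact hr0
    rcases eq_or_ne j m with rfl | hjm
    · rw [hptv, hcm, dist_self]; exact hr0
    have hocc := hOocc j hj hj0 hjm
    have : pt j = w hocc.choose := by
      simp [hptdef, hj0, hjm, hocc]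
    rw [this]
    exact mem_closedBall.mp hocc.choose_spec
  have hptw : ∀ j ∈ O, j ≠ 0 → j ≠ m → ∃ l, pt j = w l := by
    intro j hj hj0 hjm
    have hocc := hOocc j hj hj0 hjm
    exact ⟨hocc.choose, by simp [hptdef, hj0, hjm, hocc]⟩
  set U : ℕ → E := fun i => pt (ε i) with hUdef
  have hpk : p ≤ k := by
    have hsub : O ⊆ Finset.range (m+1) := by
      intro j hj; rw [Finset.mem_range]; exact Nat.lt_succ_of_le (hOsub j hj)
    have := Finset.card_le_card hsub
    rw [Finset.card_range] at this
    omega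
  have hmem : (∑ i ∈ Finset.Icc 1 p, dist (U i) (U (i - 1)) ^ ν) ∈
      {En : ℝ | ∃ m' ≤ k, ∃ U : ℕ → E, U 0 = u ∧ U m' = v ∧
        (∀ i, 0 < i → i < m' → ∃ j : Fin n, U i = w j) ∧
        En = ∑ i ∈ Finset.Icc 1 m', dist (U i) (U (i - 1)) ^ ν} := by
    refine ⟨p, hpk, U, ?_, ?_, ?_, rfl⟩
    · show pt (ε 0) = u
      rw [hε0, hptu]
    · show pt (ε p) = v
      rw [hεp, hptv]
    · intro i hi1 hi2
      have hi3 : i < p + 1 := by omega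
      have hne0 : ε i ≠ 0 := by
        have := hεmono 0 i (Nat.succ_pos p) hi3 hi1
        omega
      have hnem : ε i ≠ m := by
        have := hεmono i p hi3 (Nat.lt_succ_self p) hi2
        rw [hεp] at this
        omega
      exact hptw (ε i) (hεO i hi3) hne0 hnem
  have hbdd : BddBelow {En : ℝ | ∃ m' ≤ k, ∃ U : ℕ → E, U 0 = u ∧ U m' = v ∧
      (∀ i, 0 < i → i < m' → ∃ j : Fin n, U i = w j) ∧
      En = ∑ i ∈ Finset.Icc 1 m', dist (U i) (U (i - 1)) ^ ν} := by
    refine ⟨0, fun x hx => ?_⟩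
    obtain ⟨m', _, U', _, _, _, rfl⟩ := hx
    exact Finset.sum_nonneg fun i _ => Real.rpow_nonneg dist_nonneg ν
  refine le_trans (csInf_le hbdd hmem) ?_
  -- now bound the energy sum
  set T : ℕ × ℕ → ℝ := fun x =>
    Set.indicator (Bset d n c x.1 x.2) (fun _ => (h + 2 * r) ^ ν * (x.2:ℝ) ^ ν) w with hTdef
  set φ : ℕ → ℕ × ℕ := fun i => (ε (i-1), ε i - ε (i-1)) with hφdef
  have key : ∀ i ∈ Finset.Icc 1 p, dist (U i) (U (i-1)) ^ ν ≤ T (φ i) := by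
    intro i hi
    rw [Finset.mem_Icc] at hi
    obtain ⟨hi1, hi2⟩ := hi
    have hia : i - 1 < p + 1 := by omega
    have hib : i < p + 1 := by omega
    have hab : ε (i-1) < ε i := hεmono (i-1) i hia hib (by omega)
    have hbm : ε i ≤ m := hOsub _ (hεO i hib)
    set a := ε (i-1)
    set b := ε i
    set g : ℕ := b - a with hgdef
    have hg1 : 1 ≤ g := by omega
    have hwB : w ∈ Bset d n c a g := by
      intro j hj1 hj2 l hl
      have hjb : j < b := by omega
      have hi1p : i - 1 < p := by omega
      have hocc : occ j := ⟨l, hl⟩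
      have := hgap (i-1) hi1p j hj1 (by rwa [(by omega : i - 1 + 1 = i)])
      exact this hocc
    have hTval : T (φ i) = (h + 2 * r) ^ ν * (g:ℝ) ^ ν := by
      rw [hTdef, hφdef]
      exact Set.indicator_of_mem hwB _
    rw [hTval]
    have hdistb : dist (U i) (U (i-1)) ≤ (g:ℝ) * (h + 2*r) := by
      have htri : dist (pt b) (pt a) ≤ dist (pt b) (c b) + dist (c b) (c a) + dist (c a) (pt a) :=
        dist_triangle4 _ _ _ _
      have h1 : dist (pt b) (c b) ≤ r := hptball b (hεO i hib)
      have h2 : dist (c a) (pt a) ≤ r := by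
        rw [dist_comm]; exact hptball a (hεO (i-1) hia)
      have hba : (a:ℝ) ≤ (b:ℝ) := by exact_mod_cast hab.le
      have hgr2 : ((g:ℕ):ℝ) = (b:ℝ) - (a:ℝ) := by
        rw [hgdef]; push_cast [hab.le]; ring
      have h3 : dist (c b) (c a) = (g:ℝ) * h := by
        rw [hcdef]
        simp only []
        rw [seg_dist, hhdef, div_sub_div_same, abs_div,
          abs_of_nonneg (by linarith : (0:ℝ) ≤ (b:ℝ) - (a:ℝ)),
          abs_of_nonneg (by positivity : (0:ℝ) ≤ (m:ℝ)), hgr2]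
        ring
      have hgr : (1:ℝ) ≤ (g:ℝ) := by exact_mod_cast hg1
      have : dist (pt b) (pt a) ≤ r + (g:ℝ) * h + r := by linarith
      calc dist (U i) (U (i-1)) = dist (pt b) (pt a) := rfl
        _ ≤ r + (g:ℝ) * h + r := this
        _ ≤ (g:ℝ) * (h + 2*r) := by nlinarith
    calc dist (U i) (U (i-1)) ^ ν ≤ ((g:ℝ) * (h + 2*r)) ^ ν := by
          apply Real.rpow_le_rpow dist_nonneg hdistb (by linarith)
      _ = (h + 2 * r) ^ ν * (g:ℝ) ^ ν := by
          rw [Real.mul_rpow (by positivity) (by positivity), mul_comm]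
  refine le_trans (Finset.sum_le_sum key) ?_
  have himg : Finset.image φ (Finset.Icc 1 p) ⊆
      (Finset.range m ×ˢ Finset.Icc 1 m).filter (fun x => x.1 + x.2 ≤ m) := by
    intro x hx
    rw [Finset.mem_image] at hx
    obtain ⟨i, hi, rfl⟩ := hx
    rw [Finset.mem_Icc] at hi
    obtain ⟨hi1, hi2⟩ := hi
    have hia : i - 1 < p + 1 := by omega
    have hib : i < p + 1 := by omega
    have hab : ε (i-1) < ε i := hεmono (i-1) i hia hib (by omega)
    have hbm : ε i ≤ m := hOsub _ (hεO i hib)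
    have ham : ε (i-1) < m := by
      rcases eq_or_lt_of_le (show i - 1 ≤ p by omega) with heq | hlt
      · omega
      · have := hεmono (i-1) p hia (Nat.lt_succ_self p) hlt
        rw [hεp] at this
        omega
    simp only [hφdef, Finset.mem_filter, Finset.mem_product, Finset.mem_range, Finset.mem_Icc]
    refine ⟨⟨ham, ?_, ?_⟩, ?_⟩ <;> omega
  have hinj : ∀ x ∈ Finset.Icc 1 p, ∀ y ∈ Finset.Icc 1 p, φ x = φ y → x = y := by
    intro x hx y hy hxy
    rw [Finset.mem_Icc] at hx hy
    rw [hφdef, Prod.mk.injEq] at hxy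
    obtain ⟨h1, -⟩ := hxy
    by_contra hne
    rcases Nat.lt_or_ge x y with hlt | hge
    · have := hεmono (x-1) (y-1) (by omega) (by omega) (by omega)
      omega
    · have hgt : y < x := by omega
      have := hεmono (y-1) (x-1) (by omega) (by omega) (by omega)
      omega
  calc (∑ i ∈ Finset.Icc 1 p, T (φ i))
      = ∑ x ∈ Finset.image φ (Finset.Icc 1 p), T x := (Finset.sum_image hinj).symm
    _ ≤ ∑ x ∈ (Finset.range m ×ˢ Finset.Icc 1 m).filter (fun x => x.1 + x.2 ≤ m), T x := by
        apply Finset.sum_le_sum_of_subset_of_nonneg himg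
        intro x _ _
        rw [hTdef]
        apply Set.indicator_nonneg
        intro _ _
        positivity
    _ = _ := by rw [hTdef]

lemma gap_measure (hd : 0 < d) (n : ℕ) (hn : 1 ≤ n) (u v : E)
    (hu : ∀ i, u i ∈ Set.Icc 0 ((n:ℝ) ^ ((1:ℝ)/d)))
    (hv : ∀ i, v i ∈ Set.Icc 0 ((n:ℝ) ^ ((1:ℝ)/d)))
    (m : ℕ) (hm1 : 1 ≤ m)
    (hhalf : 2 ≤ m → (1:ℝ)/2 ≤ dist u v / m) (a g : ℕ) (hg : 1 ≤ g) (hag : a + g ≤ m) :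
    (Measure.pi fun _ : Fin n => (n : ENNReal)⁻¹ • volume.restrict
        {y : E | ∀ i, y i ∈ Set.Icc 0 ((n : ℝ) ^ ((1 : ℝ) / d))})
      (Bset d n (fun j => u + ((j:ℝ)/m) • (v - u)) a g)
    ≤ ENNReal.ofReal (Real.exp (-(1/(4*(d:ℝ)+2))) ^ (g-1)) := by
  haveI := isProb d n hd hn
  set μ := (Measure.pi fun _ : Fin n => (n : ENNReal)⁻¹ • volume.restrict
      {y : E | ∀ i, y i ∈ Set.Icc 0 ((n : ℝ) ^ ((1 : ℝ) / d))}) with hμdef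
  set c : ℕ → E := fun j => u + ((j:ℝ)/m) • (v - u) with hcdef
  rcases eq_or_lt_of_le hg with hg1 | hg2
  · -- g = 1
    rw [← hg1]
    simp only [Nat.sub_self, pow_zero, ENNReal.ofReal_one]
    exact prob_le_one
  -- g ≥ 2
  have hg2' : 2 ≤ g := hg2
  have hm2 : 2 ≤ m := by omega
  set r : ℝ := Real.sqrt d with hrdef
  have hr0 : 0 ≤ r := Real.sqrt_nonneg d
  set R : ℝ := dist u v with hRdef
  set h : ℝ := R / m with hhdef
  have hh2 : (1:ℝ)/2 ≤ h := hhalf hm2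
  have hh0 : (0:ℝ) < h := by linarith
  have hd1 : (1:ℝ) ≤ d := by exact_mod_cast hd
  have hsqd : r ≤ d := by
    rw [hrdef]
    have h1 : Real.sqrt d ≤ Real.sqrt ((d:ℝ)^2) := Real.sqrt_le_sqrt (by nlinarith)
    rwa [Real.sqrt_sq (by positivity)] at h1
  set t : ℕ := ⌈(2*r+1)/h⌉₊ with htdef
  have ht1 : 1 ≤ t := Nat.one_le_ceil_iff.mpr (by positivity)
  have hth : 2*r+1 ≤ t*h := by
    have := Nat.le_ceil ((2*r+1)/h)
    rw [div_le_iff₀ hh0] at this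
    exact_mod_cast this
  have htT : t ≤ 4*d+2 := by
    rw [htdef]
    apply Nat.ceil_le.mpr
    rw [div_le_iff₀ hh0]
    push_cast
    nlinarith
  set N : ℕ := (g-2)/t + 1 with hNdef
  have hNt : g - 1 ≤ N * t := by
    have h1 := Nat.div_add_mod (g-2) t
    have h2 : (g-2) % t < t := Nat.mod_lt _ (by omega)
    have h3 : N * t = ((g-2)/t) * t + t := by rw [hNdef]; ring
    have h4 : ((g-2)/t) * t = t * ((g-2)/t) := by ring
    omega
  have hidx : ∀ s, s < N → t*s ≤ g-2 := by
    intro s hs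
    have hs' : s ≤ (g-2)/t := by omega
    calc t*s ≤ t*((g-2)/t) := Nat.mul_le_mul_left t hs'
      _ ≤ g-2 := by rw [mul_comm]; exact Nat.div_mul_le_self _ _
  set cs : ℕ → E := fun s => c (a + 1 + t*s) with hcsdef
  have hcdist : ∀ j j' : ℕ, dist (c j) (c j') = |(j:ℝ) - (j':ℝ)| / m * R := by
    intro j j'
    rw [hcdef]
    simp only []
    rw [seg_dist, div_sub_div_same]
    rw [abs_div, abs_of_nonneg (by positivity : (0:ℝ) ≤ (m:ℝ))]
  have hsubset : Bset d n c a g ⊆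
      {w : Fin n → E | ∀ l, ∀ s, s < N → w l ∉ closedBall (cs s) r} := by
    intro w hw l s hs
    apply hw (a + 1 + t*s) (by omega)
    have := hidx s hs
    omega
  refine le_trans (measure_mono hsubset) (le_trans (avoid_measure hd n hn N cs ?_ ?_) ?_)
  · intro s hs i
    rw [hcsdef, hcdef]
    simp only []
    apply seg_mem_Q _ u v hu hv
    · positivity
    · rw [div_le_one (by positivity : (0:ℝ) < (m:ℝ))]
      have := hidx s hs
      have : a + 1 + t*s ≤ m := by omega
      exact_mod_cast this
  · intro s hs s' hs' hne
    rw [hcsdef]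
    simp only []
    rw [hcdist]
    have habs : |((a+1+t*s : ℕ):ℝ) - ((a+1+t*s' : ℕ):ℝ)| = (t:ℝ) * |(s:ℝ) - (s':ℝ)| := by
      push_cast
      rw [show ((a:ℝ)+1+t*s) - ((a:ℝ)+1+t*s') = (t:ℝ)*((s:ℝ)-(s':ℝ)) by ring]
      rw [abs_mul, abs_of_nonneg (by positivity : (0:ℝ) ≤ (t:ℝ))]
    rw [habs]
    have hss : (1:ℝ) ≤ |(s:ℝ) - (s':ℝ)| := by
      rcases Nat.lt_or_ge s s' with hlt | hge
      · have h1 : (s:ℝ) + 1 ≤ (s':ℝ) := by exact_mod_cast hlt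
        rw [abs_sub_comm, abs_of_nonneg (by linarith)]
        linarith
      · have hlt : s' < s := by omega
        have h1 : (s':ℝ) + 1 ≤ (s:ℝ) := by exact_mod_cast hlt
        rw [abs_of_nonneg (by linarith)]
        linarith
    have ht0 : (0:ℝ) < t := by exact_mod_cast ht1
    have hRm : R = h * m := by rw [hhdef]; field_simp
    calc 2*r < 2*r + 1 := by linarith
      _ ≤ t*h := hth
      _ ≤ (t:ℝ) * |(s:ℝ) - (s':ℝ)| * h := by nlinarith
      _ = (t:ℝ) * |(s:ℝ) - (s':ℝ)| / m * R := by rw [hRm]; field_simp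
  · apply ENNReal.ofReal_le_ofReal
    rw [← Real.exp_nat_mul]
    apply Real.exp_le_exp.mpr
    have hcast : ((g-1 : ℕ):ℝ) ≤ (N:ℝ) * (4*(d:ℝ)+2) := by
      calc ((g-1 : ℕ):ℝ) ≤ ((N*t : ℕ):ℝ) := by exact_mod_cast hNt
        _ ≤ ((N*(4*d+2) : ℕ):ℝ) := by
            exact_mod_cast Nat.mul_le_mul_left N htT
        _ = (N:ℝ) * (4*(d:ℝ)+2) := by push_cast; ring
    rw [show ((g-1:ℕ):ℝ) * -(1/(4*(d:ℝ)+2)) = -(((g-1:ℕ):ℝ)/(4*(d:ℝ)+2)) by ring]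
    rw [neg_le_neg_iff]
    rw [div_le_iff₀ (by positivity)]
    exact hcast

def Sconst (P : ℕ) (θ : ℝ) : ℝ := ∑' g : ℕ, ((g:ℝ)+1)^P * θ^g

lemma Ssummable (P : ℕ) (θ : ℝ) (hθ0 : 0 < θ) (hθ1 : θ < 1) :
    Summable (fun g : ℕ => ((g:ℝ)+1)^P * θ^g) := by
  have h0 : Summable (fun j : ℕ => (j:ℝ)^P * θ^j * θ⁻¹) := by
    apply Summable.mul_right
    apply summable_pow_mul_geometric_of_norm_lt_one
    rw [Real.norm_eq_abs, abs_of_pos hθ0]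
    exact hθ1
  have h1 : Summable (fun g : ℕ => ((g+1:ℕ):ℝ)^P * θ^(g+1) * θ⁻¹) :=
    (summable_nat_add_iff 1).mpr h0
  apply h1.congr
  intro g
  push_cast
  rw [pow_succ]
  field_simp

lemma Sone (P : ℕ) (θ : ℝ) (hθ0 : 0 < θ) (hθ1 : θ < 1) : 1 ≤ Sconst P θ := by
  have := Summable.le_tsum (Ssummable P θ hθ0 hθ1) 0 (fun j _ => by positivity)
  simpa [Sconst] using this

lemma row_bound (ν : ℝ) (hν1 : 0 ≤ ν) (P : ℕ) (hP : ν ≤ P) (θ : ℝ)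
    (hθ0 : 0 < θ) (hθ1 : θ < 1) (M : ℕ) :
    ∑ g ∈ Finset.Icc 1 M, (g:ℝ)^ν * θ^(g-1) ≤ Sconst P θ := by
  rw [show Finset.Icc 1 M = Finset.Ico 1 (M+1) from (Finset.Ico_add_one_right_eq_Icc 1 M).symm,
    Finset.sum_Ico_eq_sum_range]
  have key : ∀ i ∈ Finset.range (M + 1 - 1), ((1+i:ℕ):ℝ)^ν * θ^(1+i-1) ≤ ((i:ℝ)+1)^P * θ^i := by
    intro i _
    have h1 : ((1+i:ℕ):ℝ) = (i:ℝ)+1 := by push_cast; ring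
    have h2 : (1+i-1 : ℕ) = i := by omega
    rw [h1, h2]
    apply mul_le_mul_of_nonneg_right _ (by positivity)
    have hbase : (1:ℝ) ≤ (i:ℝ)+1 := by linarith [Nat.cast_nonneg (α := ℝ) i]
    calc ((i:ℝ)+1)^ν ≤ ((i:ℝ)+1)^(P:ℝ) := Real.rpow_le_rpow_of_exponent_le hbase hP
      _ = ((i:ℝ)+1)^P := Real.rpow_natCast _ P
  calc (∑ i ∈ Finset.range (M+1-1), ((1+i:ℕ):ℝ)^ν * θ^(1+i-1))
      ≤ ∑ i ∈ Finset.range (M+1-1), ((i:ℝ)+1)^P * θ^i := Finset.sum_le_sum key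
    _ ≤ Sconst P θ := Summable.sum_le_tsum _ (fun j _ => by positivity) (Ssummable P θ hθ0 hθ1)

lemma full_sum_bound (ν : ℝ) (hν1 : 0 ≤ ν) (P : ℕ) (hP : ν ≤ P) (θ : ℝ)
    (hθ0 : 0 < θ) (hθ1 : θ < 1) (m : ℕ) :
    ∑ x ∈ (Finset.range m ×ˢ Finset.Icc 1 m).filter (fun x => x.1 + x.2 ≤ m),
        (x.2:ℝ)^ν * θ^(x.2-1) ≤ (m:ℝ) * Sconst P θ := by
  calc (∑ x ∈ (Finset.range m ×ˢ Finset.Icc 1 m).filter (fun x => x.1 + x.2 ≤ m),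
        (x.2:ℝ)^ν * θ^(x.2-1))
      ≤ ∑ x ∈ Finset.range m ×ˢ Finset.Icc 1 m, (x.2:ℝ)^ν * θ^(x.2-1) := by
        apply Finset.sum_le_sum_of_subset_of_nonneg (Finset.filter_subset _ _)
        intro x _ _
        positivity
    _ = ∑ a ∈ Finset.range m, ∑ g ∈ Finset.Icc 1 m, (g:ℝ)^ν * θ^(g-1) := by
        rw [Finset.sum_product]
    _ ≤ ∑ _a ∈ Finset.range m, Sconst P θ :=
        Finset.sum_le_sum (fun a _ => row_bound ν hν1 P hP θ hθ0 hθ1 m)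
    _ = (m:ℝ) * Sconst P θ := by
        rw [Finset.sum_const, Finset.card_range, nsmul_eq_mul]

lemma arith_final (ν : ℝ) (hν : 1 ≤ ν) (r S R : ℝ) (hr0 : 0 ≤ r) (hS1 : 1 ≤ S)
    (hR0 : 0 ≤ R) (k m : ℕ) (hk : 1 ≤ k) (hm1 : 1 ≤ m)
    (hcase : (m = k ∧ 1/2 ≤ R/m) ∨ ((m:ℝ) ≤ R + 1 ∧ R ≤ m)) :
    (R/m + 2*r)^ν * ((m:ℝ) * S) ≤ (1+4*r)^ν * S * max ((k:ℝ)*(R/k)^ν) (R+1) := by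
  have hm0 : (0:ℝ) < m := by exact_mod_cast hm1
  have hν0 : 0 ≤ ν := by linarith
  rcases hcase with ⟨hm, hh2⟩ | ⟨hmR, hRm⟩
  · set h : ℝ := R/(m:ℝ) with hhdef
    have hh0 : (0:ℝ) ≤ h := by positivity
    have s1 : h + 2*r ≤ (1+4*r)*h := by nlinarith
    have s2 : (h+2*r)^ν ≤ (1+4*r)^ν * h^ν := by
      calc (h+2*r)^ν ≤ ((1+4*r)*h)^ν := Real.rpow_le_rpow (by positivity) s1 hν0
        _ = (1+4*r)^ν * h^ν := Real.mul_rpow (by positivity) hh0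
    calc (h+2*r)^ν * ((m:ℝ)*S) ≤ ((1+4*r)^ν * h^ν) * ((m:ℝ)*S) :=
          mul_le_mul_of_nonneg_right s2 (by positivity)
      _ = (1+4*r)^ν * S * ((m:ℝ) * h^ν) := by ring
      _ ≤ (1+4*r)^ν * S * max ((k:ℝ)*(R/k)^ν) (R+1) := by
          apply mul_le_mul_of_nonneg_left _ (by positivity)
          have : (m:ℝ) * h^ν = (k:ℝ)*(R/k)^ν := by rw [hhdef, hm]
          rw [this]
          exact le_max_left _ _
  · have hh0 : (0:ℝ) ≤ R/m := by positivity
    have hh1 : R/m ≤ 1 := by rw [div_le_one hm0]; exact hRm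
    have s1 : R/m + 2*r ≤ 1+4*r := by linarith
    have s2 : (R/m+2*r)^ν ≤ (1+4*r)^ν := Real.rpow_le_rpow (by positivity) s1 hν0
    calc (R/m+2*r)^ν * ((m:ℝ)*S) ≤ (1+4*r)^ν * ((m:ℝ)*S) :=
          mul_le_mul_of_nonneg_right s2 (by positivity)
      _ = (1+4*r)^ν * S * (m:ℝ) := by ring
      _ ≤ (1+4*r)^ν * S * (R+1) := mul_le_mul_of_nonneg_left hmR (by positivity)
      _ ≤ (1+4*r)^ν * S * max ((k:ℝ)*(R/k)^ν) (R+1) :=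
          mul_le_mul_of_nonneg_left (le_max_right _ _) (by positivity)


/-- let `u, v` be points of `Q = [0, n^(1/d)]^d` at distance
`R = dist u v`, and let `V_n = (w 0, ..., w (n-1))` be `n` i.i.d. uniform points in `Q`.
Let `E_k(u,v;V_n)` be the minimal energy `∑ ‖u_i − u_{i−1}‖^ν` over all paths
`u = u_0, u_1, ..., u_m = v` of length `m ≤ k` with intermediate vertices among the
`w j`. Then for `ν ≥ 1`, `E[E_k(u,v;V_n)] = O(max{k (R/k)^ν, R + 1})`, with an implied
constant depending only on `d` and `ν` (not on `n`, `k`, `u`, `v`). -/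
theorem stmt15 (d : ℕ) (hd : 0 < d) (ν : ℝ) (hν : 1 ≤ ν) :
    ∃ C > (0 : ℝ), ∀ (n k : ℕ), 1 ≤ n → 1 ≤ k →
      ∀ u ∈ {y : EuclideanSpace ℝ (Fin d) |
          ∀ i, y i ∈ Set.Icc 0 ((n : ℝ) ^ ((1 : ℝ) / d))},
      ∀ v ∈ {y : EuclideanSpace ℝ (Fin d) |
          ∀ i, y i ∈ Set.Icc 0 ((n : ℝ) ^ ((1 : ℝ) / d))},
        (∫ w : Fin n → EuclideanSpace ℝ (Fin d),
            sInf {En : ℝ | ∃ m ≤ k, ∃ U : ℕ → EuclideanSpace ℝ (Fin d),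
              U 0 = u ∧ U m = v ∧ (∀ i, 0 < i → i < m → ∃ j : Fin n, U i = w j) ∧
              En = ∑ i ∈ Finset.Icc 1 m, dist (U i) (U (i - 1)) ^ ν}
          ∂(Measure.pi fun _ : Fin n => (n : ENNReal)⁻¹ • volume.restrict
              {y : EuclideanSpace ℝ (Fin d) |
                ∀ i, y i ∈ Set.Icc 0 ((n : ℝ) ^ ((1 : ℝ) / d))})) ≤
          C * max ((k : ℝ) * (dist u v / (k : ℝ)) ^ ν) (dist u v + 1) := by
  classical
  have hν0 : (0:ℝ) ≤ ν := by linarith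
  set r : ℝ := Real.sqrt d with hrdef
  have hr0 : (0:ℝ) ≤ r := Real.sqrt_nonneg d
  set θ : ℝ := Real.exp (-(1/(4*(d:ℝ)+2))) with hθdef
  have hθ0 : 0 < θ := Real.exp_pos _
  have hθ1 : θ < 1 := by
    rw [hθdef]
    apply Real.exp_lt_one_iff.mpr
    have : (0:ℝ) < 4*(d:ℝ)+2 := by positivity
    simp only [neg_neg, neg_lt_zero]
    positivity
  set P : ℕ := ⌈ν⌉₊ with hPdef
  have hP : ν ≤ (P:ℝ) := Nat.le_ceil ν
  set S : ℝ := Sconst P θ with hSdef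
  have hS1 : 1 ≤ S := Sone P θ hθ0 hθ1
  have hC0 : (0:ℝ) < (1+4*r)^ν * S :=
    mul_pos (Real.rpow_pos_of_pos (by linarith) ν) (by linarith)
  refine ⟨(1+4*r)^ν * S, hC0, ?_⟩
  intro n k hn hk u hu v hv
  simp only [Set.mem_setOf_eq] at hu hv
  set R : ℝ := dist u v with hRdef
  have hR0 : (0:ℝ) ≤ R := dist_nonneg
  set m : ℕ := if k ≤ ⌈R⌉₊ then k else max ⌈R⌉₊ 1 with hmdef
  have hm1 : 1 ≤ m := by rw [hmdef]; split <;> omega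
  have hmk : m ≤ k := by
    rw [hmdef]; split
    · exact le_rfl
    · rename_i hc; omega
  have hm0 : (0:ℝ) < m := by exact_mod_cast hm1
  have hkey : (2 ≤ m → (1:ℝ)/2 ≤ R/m) ∧
      ((m = k ∧ 1/2 ≤ R/(m:ℝ)) ∨ ((m:ℝ) ≤ R + 1 ∧ R ≤ m)) := by
    by_cases hc : k ≤ ⌈R⌉₊
    · have hme : m = k := by rw [hmdef, if_pos hc]
      have hkR : (k:ℝ) ≤ R + 1 := by
        calc (k:ℝ) ≤ (⌈R⌉₊:ℝ) := by exact_mod_cast hc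
          _ ≤ R + 1 := (Nat.ceil_lt_add_one hR0).le
      constructor
      · intro hm2
        have h2c : 2 ≤ ⌈R⌉₊ := by omega
        have hR1 : (1:ℝ) < R := by exact_mod_cast Nat.lt_ceil.mp (by omega : 1 < ⌈R⌉₊)
        rw [le_div_iff₀ hm0]
        have hmr : (m:ℝ) ≤ R + 1 := by rw [hme]; exact hkR
        linarith
      · by_cases hh2 : (1:ℝ)/2 ≤ R/(m:ℝ)
        · exact Or.inl ⟨hme, hh2⟩
        · push_neg at hh2
          refine Or.inr ⟨by rw [hme]; exact hkR, ?_⟩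
          have := (div_lt_iff₀ hm0).mp hh2
          linarith
    · push_neg at hc
      have hme : m = max ⌈R⌉₊ 1 := by rw [hmdef, if_neg (by omega)]
      have hceil_le : (⌈R⌉₊:ℝ) < R + 1 := Nat.ceil_lt_add_one hR0
      have hmR : (m:ℝ) ≤ R + 1 := by
        rcases Nat.eq_zero_or_pos ⌈R⌉₊ with h0 | h1
        · have hmm : m = 1 := by rw [hme, h0]; omega
          rw [hmm]; push_cast; linarith
        · have hmm : m = ⌈R⌉₊ := by rw [hme]; exact max_eq_left h1
          rw [hmm]; linarith
      have hRm : R ≤ (m:ℝ) := by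
        rcases Nat.eq_zero_or_pos ⌈R⌉₊ with h0 | h1
        · have hR00 : R ≤ 0 := Nat.ceil_eq_zero.mp h0
          linarith
        · have hmm : m = ⌈R⌉₊ := by rw [hme]; exact max_eq_left h1
          rw [hmm]; exact Nat.le_ceil R
      refine ⟨?_, Or.inr ⟨hmR, hRm⟩⟩
      intro hm2
      rw [le_div_iff₀ hm0]
      have h2c : 2 ≤ ⌈R⌉₊ := by rw [hme] at hm2; omega
      have hR1 : (1:ℝ) < R := by exact_mod_cast Nat.lt_ceil.mp (by omega : 1 < ⌈R⌉₊)
      linarith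
  obtain ⟨hhalf, hcase⟩ := hkey
  -- measure setup
  haveI hprob1 : IsProbabilityMeasure ((n : ENNReal)⁻¹ • volume.restrict
      {y : EuclideanSpace ℝ (Fin d) | ∀ i, y i ∈ Set.Icc 0 ((n:ℝ) ^ ((1:ℝ)/d))}) :=
    isProb d n hd hn
  set μ := Measure.pi fun _ : Fin n => (n : ENNReal)⁻¹ • volume.restrict
      {y : EuclideanSpace ℝ (Fin d) | ∀ i, y i ∈ Set.Icc 0 ((n:ℝ) ^ ((1:ℝ)/d))} with hμdef
  set f : (Fin n → EuclideanSpace ℝ (Fin d)) → ℝ := fun w =>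
    sInf {En : ℝ | ∃ m ≤ k, ∃ U : ℕ → EuclideanSpace ℝ (Fin d),
      U 0 = u ∧ U m = v ∧ (∀ i, 0 < i → i < m → ∃ j : Fin n, U i = w j) ∧
      En = ∑ i ∈ Finset.Icc 1 m, dist (U i) (U (i - 1)) ^ ν} with hfdef
  have hf0 : ∀ w, 0 ≤ f w := by
    intro w
    apply Real.sInf_nonneg
    rintro x ⟨m', _, U', _, _, _, rfl⟩
    exact Finset.sum_nonneg fun i _ => Real.rpow_nonneg dist_nonneg ν
  set c : ℕ → EuclideanSpace ℝ (Fin d) := fun j => u + ((j:ℝ)/m) • (v - u) with hcdef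
  set D := (Finset.range m ×ˢ Finset.Icc 1 m).filter (fun x => x.1 + x.2 ≤ m) with hDdef
  have hRHS0 : (0:ℝ) ≤ (1+4*r)^ν * S * max ((k:ℝ) * (R/(k:ℝ)) ^ ν) (R + 1) := by
    apply mul_nonneg hC0.le
    calc (0:ℝ) ≤ R + 1 := by linarith
      _ ≤ max ((k:ℝ) * (R/(k:ℝ)) ^ ν) (R + 1) := le_max_right _ _
  by_cases hint : Integrable f μ
  · -- main case
    have hlin : (∫⁻ w, ENNReal.ofReal (f w) ∂μ)
        ≤ ENNReal.ofReal ((1+4*r)^ν * S * max ((k:ℝ) * (R/(k:ℝ)) ^ ν) (R + 1)) := by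
      have hpoint : ∀ w, ENNReal.ofReal (f w) ≤
          ∑ x ∈ D, (Bset d n c x.1 x.2).indicator
            (fun _ => ENNReal.ofReal ((R/m + 2*r)^ν * (x.2:ℝ)^ν)) w := by
        intro w
        have h1 : f w ≤ ∑ x ∈ D, Set.indicator (Bset d n c x.1 x.2)
            (fun _ => (R/m + 2*r)^ν * (x.2:ℝ)^ν) w :=
          path_bound ν hν n k u v w m hm1 hmk
        calc ENNReal.ofReal (f w)
            ≤ ENNReal.ofReal (∑ x ∈ D, Set.indicator (Bset d n c x.1 x.2)
                (fun _ => (R/m + 2*r)^ν * (x.2:ℝ)^ν) w) := ENNReal.ofReal_le_ofReal h1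
          _ = ∑ x ∈ D, ENNReal.ofReal (Set.indicator (Bset d n c x.1 x.2)
                (fun _ => (R/m + 2*r)^ν * (x.2:ℝ)^ν) w) := by
              apply ENNReal.ofReal_sum_of_nonneg
              intro x _
              apply Set.indicator_nonneg
              intro _ _
              positivity
          _ = ∑ x ∈ D, (Bset d n c x.1 x.2).indicator
                (fun _ => ENNReal.ofReal ((R/m + 2*r)^ν * (x.2:ℝ)^ν)) w := by
              apply Finset.sum_congr rfl
              intro x _
              by_cases hw : w ∈ Bset d n c x.1 x.2
              · simp [Set.indicator_of_mem hw]
              · simp [Set.indicator_of_notMem hw]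
      calc (∫⁻ w, ENNReal.ofReal (f w) ∂μ)
          ≤ ∫⁻ w, (∑ x ∈ D, (Bset d n c x.1 x.2).indicator
              (fun _ => ENNReal.ofReal ((R/m + 2*r)^ν * (x.2:ℝ)^ν)) w) ∂μ :=
            lintegral_mono hpoint
        _ = ∑ x ∈ D, ∫⁻ w, (Bset d n c x.1 x.2).indicator
              (fun _ => ENNReal.ofReal ((R/m + 2*r)^ν * (x.2:ℝ)^ν)) w ∂μ := by
            apply lintegral_finset_sum
            intro x _
            exact measurable_const.indicator (Bset_measurable d n c x.1 x.2)
        _ = ∑ x ∈ D, ENNReal.ofReal ((R/m + 2*r)^ν * (x.2:ℝ)^ν) * μ (Bset d n c x.1 x.2) := by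
            apply Finset.sum_congr rfl
            intro x _
            exact lintegral_indicator_const (Bset_measurable d n c x.1 x.2) _
        _ ≤ ∑ x ∈ D, ENNReal.ofReal ((R/m + 2*r)^ν * (x.2:ℝ)^ν) * ENNReal.ofReal (θ^(x.2-1)) := by
            apply Finset.sum_le_sum
            intro x hx
            apply mul_le_mul_right
            rw [hDdef, Finset.mem_filter, Finset.mem_product, Finset.mem_Icc] at hx
            have h1 : 1 ≤ x.2 := hx.1.2.1
            have h2 : x.1 + x.2 ≤ m := hx.2
            rw [hθdef]
            exact gap_measure hd n hn u v hu hv m hm1 hhalf x.1 x.2 h1 h2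
        _ = ∑ x ∈ D, ENNReal.ofReal ((R/m + 2*r)^ν * (x.2:ℝ)^ν * θ^(x.2-1)) := by
            apply Finset.sum_congr rfl
            intro x _
            rw [← ENNReal.ofReal_mul (by positivity)]
        _ = ENNReal.ofReal (∑ x ∈ D, (R/m + 2*r)^ν * ((x.2:ℝ)^ν * θ^(x.2-1))) := by
            rw [← ENNReal.ofReal_sum_of_nonneg (fun x _ => by positivity)]
            congr 1
            apply Finset.sum_congr rfl
            intro x _
            rw [mul_assoc]
        _ ≤ ENNReal.ofReal ((1+4*r)^ν * S * max ((k:ℝ) * (R/(k:ℝ)) ^ ν) (R + 1)) := by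
            apply ENNReal.ofReal_le_ofReal
            calc (∑ x ∈ D, (R/m + 2*r)^ν * ((x.2:ℝ)^ν * θ^(x.2-1)))
                = (R/m + 2*r)^ν * (∑ x ∈ D, (x.2:ℝ)^ν * θ^(x.2-1)) := by
                  rw [Finset.mul_sum]
              _ ≤ (R/m + 2*r)^ν * ((m:ℝ) * S) := by
                  apply mul_le_mul_of_nonneg_left _ (by positivity)
                  rw [hSdef, hDdef]
                  exact full_sum_bound ν hν0 P hP θ hθ0 hθ1 m
              _ ≤ (1+4*r)^ν * S * max ((k:ℝ) * (R/(k:ℝ)) ^ ν) (R + 1) :=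
                  arith_final ν hν r S R hr0 hS1 hR0 k m hk hm1 hcase
    rw [integral_eq_lintegral_of_nonneg_ae (Filter.Eventually.of_forall hf0)
      hint.aestronglyMeasurable]
    exact ENNReal.toReal_le_of_le_ofReal hRHS0 hlin
  · rw [integral_undef hint]
    exact hRHS0

end AuxStmt15
end

section
/- Let ν > d ≥ 1, and let n_e ≥ 0 be reals indexed by edges of a rooted tree such that: (a) for each edge e at distance i from the root with i > δ, n_e ≤ n·2^(1+δ−i); (b) for each i, ∑_{e at distance i} n_e ≤ n; and (c) n_e ≤ n always. Then ∑_e n_e^(ν/(ν−1)) = O((1 + δ)·n^(ν/(ν−1))). -/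
open Finset Real

lemma geom_aux {r : ℝ} (h0 : 0 ≤ r) (h1 : r < 1) (N : ℕ) :
    ∑ k ∈ range N, r ^ k ≤ (1 - r)⁻¹ := by
  have hrN : 0 ≤ r ^ N := pow_nonneg h0 N
  have h : (r ^ N - 1) / (r - 1) = (1 - r ^ N) / (1 - r) := by
    rw [div_eq_div_iff (by linarith) (by linarith)]; ring
  rw [geom_sum_eq (ne_of_lt h1) N, h, div_le_iff₀ (by linarith), inv_mul_eq_div,
    le_div_iff₀ (by linarith)]
  nlinarith

/-- let `ν > 1` and let `n_e ≥ 0` be reals indexed by the (finitely many)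
edges of a rooted tree, each edge `e` having a distance `level e` from the root, such
that: (a) `n_e ≤ n·2^(1+δ−i)` for each edge at distance `i > δ` from the root;
(b) `∑_{e at distance i} n_e ≤ n` for each `i`; and (c) `n_e ≤ n` always. Then
`∑_e n_e^(ν/(ν−1)) = O((1+δ) n^(ν/(ν−1)))`, with implied constant depending only
on `ν`. -/
theorem stmt17 (ν : ℝ) (hν : 1 < ν) :
    ∃ C > (0 : ℝ), ∀ (E : Type) (_ : Fintype E) (level : E → ℕ) (ne : E → ℝ)
      (n δ : ℝ), 1 ≤ n → 0 ≤ δ →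
      (∀ e, 0 ≤ ne e) →
      (∀ e, (δ : ℝ) < (level e : ℝ) →
        ne e ≤ n * (2 : ℝ) ^ ((1 : ℝ) + δ - (level e : ℝ))) →
      (∀ i : ℕ, ∑ e ∈ Finset.univ.filter (fun e => level e = i), ne e ≤ n) →
      (∀ e, ne e ≤ n) →
      ∑ e : E, ne e ^ (ν / (ν - 1)) ≤ C * (1 + δ) * n ^ (ν / (ν - 1)) := by
  have hν1 : 0 < ν - 1 := by linarith
  set q : ℝ := 1 / (ν - 1) with hqdef
  have hq0 : 0 < q := by positivity
  set r : ℝ := (2 : ℝ) ^ (-q) with hrdef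
  have hr0 : 0 < r := Real.rpow_pos_of_pos (by norm_num) _
  have hr1 : r < 1 := Real.rpow_lt_one_of_one_lt_of_neg (by norm_num) (by linarith)
  have h2q : (0:ℝ) < (2:ℝ) ^ q := Real.rpow_pos_of_pos (by norm_num) _
  have hCpos : (0:ℝ) < 1 + (2:ℝ) ^ q * (1 - r)⁻¹ := by
    have : (0:ℝ) < (2:ℝ) ^ q * (1 - r)⁻¹ := mul_pos h2q (inv_pos.2 (by linarith))
    linarith
  refine ⟨1 + (2:ℝ) ^ q * (1 - r)⁻¹, hCpos, ?_⟩
  intro E _ level ne n δ hn hδ hne0 hbd hlev hnen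
  have hn0 : (0:ℝ) < n := by linarith
  have hp : ν / (ν - 1) = 1 + q := by rw [hqdef]; field_simp; ring
  -- pointwise key
  have key : ∀ a b : ℝ, 0 ≤ a → a ≤ b → a ^ ((1:ℝ) + q) ≤ b ^ q * a := by
    intro a b ha hab
    rw [Real.rpow_add' ha (by positivity), Real.rpow_one, mul_comm]
    exact mul_le_mul_of_nonneg_right (Real.rpow_le_rpow ha hab hq0.le) ha
  -- per-level bound
  have level_bound : ∀ (i : ℕ) (B : ℝ), 0 ≤ B → (∀ e, level e = i → ne e ≤ B) →
      ∑ e ∈ Finset.univ.filter (fun e => level e = i), ne e ^ (ν / (ν - 1))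
        ≤ B ^ q * n := by
    intro i B hB hBe
    calc ∑ e ∈ Finset.univ.filter (fun e => level e = i), ne e ^ (ν / (ν - 1))
        ≤ ∑ e ∈ Finset.univ.filter (fun e => level e = i), B ^ q * ne e := by
          refine Finset.sum_le_sum fun e he => ?_
          rw [hp]
          exact key _ _ (hne0 e) (hBe e (by simpa using (Finset.mem_filter.1 he).2))
      _ = B ^ q * ∑ e ∈ Finset.univ.filter (fun e => level e = i), ne e := by
          rw [Finset.mul_sum]
      _ ≤ B ^ q * n :=
          mul_le_mul_of_nonneg_left (hlev i) (Real.rpow_nonneg hB q)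
  set N : ℕ := (Finset.univ.sup level) + 1 with hNdef
  have hpart : ∑ e : E, ne e ^ (ν / (ν - 1)) =
      ∑ i ∈ range N, ∑ e ∈ Finset.univ.filter (fun e => level e = i),
        ne e ^ (ν / (ν - 1)) :=
    (Finset.sum_fiberwise_of_maps_to
      (fun e _ => Finset.mem_range.2 (Nat.lt_succ_of_le
        (Finset.le_sup (Finset.mem_univ e)))) _).symm
  rw [hpart, ← Finset.sum_filter_add_sum_filter_not (range N) (fun i : ℕ => (i:ℝ) ≤ δ)]
  set m : ℕ := ⌊δ⌋₊ + 1 with hmdef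
  -- Part A
  have hA : ∑ i ∈ (range N).filter (fun i : ℕ => (i:ℝ) ≤ δ),
      ∑ e ∈ Finset.univ.filter (fun e => level e = i), ne e ^ (ν / (ν - 1))
      ≤ (1 + δ) * (n ^ q * n) := by
    calc _ ≤ ∑ i ∈ (range N).filter (fun i : ℕ => (i:ℝ) ≤ δ), n ^ q * n :=
          Finset.sum_le_sum fun i _ => level_bound i n hn0.le (fun e _ => hnen e)
      _ = ((range N).filter (fun i : ℕ => (i:ℝ) ≤ δ)).card * (n ^ q * n) := by
          rw [Finset.sum_const, nsmul_eq_mul]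
      _ ≤ (1 + δ) * (n ^ q * n) := by
          refine mul_le_mul_of_nonneg_right ?_ (by positivity)
          have hsub : (range N).filter (fun i : ℕ => (i:ℝ) ≤ δ) ⊆ range m := by
            intro i hi
            rw [Finset.mem_range, hmdef, Nat.lt_succ_iff]
            exact Nat.le_floor (by exact_mod_cast (Finset.mem_filter.1 hi).2)
          have := Finset.card_le_card hsub
          rw [Finset.card_range] at this
          calc (((range N).filter (fun i : ℕ => (i:ℝ) ≤ δ)).card : ℝ) ≤ (m : ℝ) := by
                exact_mod_cast this
            _ ≤ 1 + δ := by
                rw [hmdef]; push_cast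
                have := Nat.floor_le hδ
                linarith
  -- Part B
  have hB : ∑ i ∈ (range N).filter (fun i : ℕ => ¬(i:ℝ) ≤ δ),
      ∑ e ∈ Finset.univ.filter (fun e => level e = i), ne e ^ (ν / (ν - 1))
      ≤ (2:ℝ) ^ q * (1 - r)⁻¹ * (n ^ q * n) := by
    have step1 : ∀ i ∈ (range N).filter (fun i : ℕ => ¬(i:ℝ) ≤ δ),
        ∑ e ∈ Finset.univ.filter (fun e => level e = i), ne e ^ (ν / (ν - 1))
        ≤ ((2:ℝ) ^ ((1:ℝ) + δ - (i:ℝ))) ^ q * (n ^ q * n) := by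
      intro i hi
      have hδi : δ < (i:ℝ) := not_le.1 (Finset.mem_filter.1 hi).2
      have h2pos : (0:ℝ) < (2:ℝ) ^ ((1:ℝ) + δ - (i:ℝ)) :=
        Real.rpow_pos_of_pos (by norm_num) _
      have := level_bound i (n * (2:ℝ) ^ ((1:ℝ) + δ - (i:ℝ)))
        (by positivity) (fun e he => by rw [← he] at hδi ⊢; exact hbd e (by exact_mod_cast hδi))
      calc ∑ e ∈ Finset.univ.filter (fun e => level e = i), ne e ^ (ν / (ν - 1))
          ≤ (n * (2:ℝ) ^ ((1:ℝ) + δ - (i:ℝ))) ^ q * n := this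
        _ = ((2:ℝ) ^ ((1:ℝ) + δ - (i:ℝ))) ^ q * (n ^ q * n) := by
            rw [Real.mul_rpow hn0.le h2pos.le]; ring
    calc ∑ i ∈ (range N).filter (fun i : ℕ => ¬(i:ℝ) ≤ δ),
        ∑ e ∈ Finset.univ.filter (fun e => level e = i), ne e ^ (ν / (ν - 1))
        ≤ ∑ i ∈ (range N).filter (fun i : ℕ => ¬(i:ℝ) ≤ δ),
            ((2:ℝ) ^ ((1:ℝ) + δ - (i:ℝ))) ^ q * (n ^ q * n) :=
          Finset.sum_le_sum step1
      _ = (∑ i ∈ (range N).filter (fun i : ℕ => ¬(i:ℝ) ≤ δ),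
            ((2:ℝ) ^ ((1:ℝ) + δ - (i:ℝ))) ^ q) * (n ^ q * n) := by
          rw [Finset.sum_mul]
      _ ≤ ((2:ℝ) ^ q * (1 - r)⁻¹) * (n ^ q * n) := by
          refine mul_le_mul_of_nonneg_right ?_ (by positivity)
          -- bound the geometric-type sum
          have hsub : (range N).filter (fun i : ℕ => ¬(i:ℝ) ≤ δ) ⊆ Finset.Ico m (m + N) := by
            intro i hi
            obtain ⟨hiN, hid⟩ := Finset.mem_filter.1 hi
            rw [Finset.mem_Ico]
            constructor
            · rw [hmdef, Nat.succ_le_iff, Nat.floor_lt hδ]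
              exact not_le.1 hid
            · have : i < N := Finset.mem_range.1 hiN
              omega
            
          calc ∑ i ∈ (range N).filter (fun i : ℕ => ¬(i:ℝ) ≤ δ),
              ((2:ℝ) ^ ((1:ℝ) + δ - (i:ℝ))) ^ q
              ≤ ∑ i ∈ Finset.Ico m (m + N), ((2:ℝ) ^ ((1:ℝ) + δ - (i:ℝ))) ^ q := by
                refine Finset.sum_le_sum_of_subset_of_nonneg hsub fun i _ _ => by positivity
            _ = ∑ k ∈ range N, ((2:ℝ) ^ ((1:ℝ) + δ - ((m + k : ℕ):ℝ))) ^ q := by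
                rw [Finset.sum_Ico_eq_sum_range]
                simp
            _ ≤ ∑ k ∈ range N, (2:ℝ) ^ q * r ^ k := by
                refine Finset.sum_le_sum fun k _ => ?_
                have hfloor : (⌊δ⌋₊ : ℝ) ≤ δ := Nat.floor_le hδ
                have hmk : ((m + k : ℕ):ℝ) = (⌊δ⌋₊ : ℝ) + 1 + k := by
                  rw [hmdef]; push_cast; ring
                have hexp : (1:ℝ) + δ - ((m + k : ℕ):ℝ) ≤ 1 - (k:ℝ) := by
                  rw [hmk]
                  have : δ < (⌊δ⌋₊ : ℝ) + 1 := Nat.lt_floor_add_one δ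
                  linarith
                have h1 : ((2:ℝ) ^ ((1:ℝ) + δ - ((m + k : ℕ):ℝ))) ^ q
                    = (2:ℝ) ^ (((1:ℝ) + δ - ((m + k : ℕ):ℝ)) * q) := by
                  rw [← Real.rpow_mul (by norm_num)]
                have h2 : (2:ℝ) ^ (((1:ℝ) - (k:ℝ)) * q) = (2:ℝ) ^ q * r ^ k := by
                  have : ((1:ℝ) - (k:ℝ)) * q = q + (-q) * (k:ℝ) := by ring
                  rw [this, Real.rpow_add (by norm_num), Real.rpow_mul (by norm_num),
                    Real.rpow_natCast]
                rw [h1, ← h2]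
                exact Real.rpow_le_rpow_of_exponent_le (by norm_num)
                  (mul_le_mul_of_nonneg_right hexp hq0.le)
            _ = (2:ℝ) ^ q * ∑ k ∈ range N, r ^ k := by rw [Finset.mul_sum]
            _ ≤ (2:ℝ) ^ q * (1 - r)⁻¹ :=
                mul_le_mul_of_nonneg_left (geom_aux hr0.le hr1 N) h2q.le
  -- combine
  have hnp : n ^ (ν / (ν - 1)) = n ^ q * n := by
    rw [hp, Real.rpow_add' hn0.le (by positivity), Real.rpow_one, mul_comm]
  rw [hnp]
  have hδ1 : (1:ℝ) ≤ 1 + δ := by linarith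
  have hnqn : (0:ℝ) < n ^ q * n := by positivity
  have hG : (0:ℝ) ≤ (2:ℝ) ^ q * (1 - r)⁻¹ := mul_nonneg h2q.le (inv_nonneg.2 (by linarith))
  nlinarith [hA, hB, mul_le_mul_of_nonneg_right hδ1 (mul_nonneg hG hnqn.le)]
end
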